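/- Let w ⊆ ℤ^d be a set of d lattice points. Then either w is contained in a (d−2)-dimensional affine subspace, or the (d−1)-dimensional Hausdorff measure of the convex hull of w is at least 1/(d−1)!. -/

import Mathlib

open MeasureTheory Metric Set
open scoped ENNReal NNReal Classical

noncomputable section

/-- Euclidean space `ℝ^d`. -/
abbrev Euc (d : ℕ) := EuclideanSpace ℝ (Fin d)

def toE {d : ℕ} (v : Fin d → ℝ) : Euc d := (WithLp.equiv 2 (Fin d → ℝ)).symm v

def ofE {d : ℕ} (x : Euc d) : Fin d → ℝ := WithLp.equiv 2 (Fin d → ℝ) x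

/-- The ℓ^p norm of a vector in `ℝ^d`, for `p ∈ [1,∞]`. -/
def lpNorm {d : ℕ} (p : ℝ≥0∞) (v : Fin d → ℝ) : ℝ :=
  if p = ∞ then ⨆ i, |v i| else (∑ i, |v i| ^ p.toReal) ^ (1 / p.toReal)

/-- Singular values of a real `d×d` matrix: eigenvalues of `√(MᵀM)`. -/
def singularValues {d : ℕ} (M : Matrix (Fin d) (Fin d) ℝ) : Fin d → ℝ :=
  (Matrix.isHermitian_mul_mul_conjTranspose
    ((Matrix.posSemidef_conjTranspose_mul_self M).1.eigenvectorUnitary : Matrix (Fin d) (Fin d) ℝ)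
    (Matrix.isHermitian_diagonal (((↑) : ℝ≥0 → ℝ) ∘ NNReal.sqrt ∘ Real.toNNReal ∘
      (Matrix.posSemidef_conjTranspose_mul_self M).1.eigenvalues))).eigenvalues

/-- The Schatten `p`-norm: ℓ^p norm of the vector of singular values. -/
def schattenNorm {d : ℕ} (p : ℝ≥0∞) (M : Matrix (Fin d) (Fin d) ℝ) : ℝ :=
  lpNorm p (singularValues M)

/-- The conjugate exponent `p*` of `p ∈ [1,∞]`, with `1/p + 1/p* = 1`. -/
def dualExp (p : ℝ≥0∞) : ℝ≥0∞ :=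
  if p = 1 then ∞ else if p = ∞ then 1 else ENNReal.ofReal (p.toReal / (p.toReal - 1))

/-- The partial derivative `∂ᵢ φ`. -/
def epd {d : ℕ} (i : Fin d) (φ : Euc d → ℝ) (x : Euc d) : ℝ :=
  fderiv ℝ φ x (EuclideanSpace.single i 1)

/-- A smooth test function compactly supported inside `A`. -/
def IsTestFun {d : ℕ} (A : Set (Euc d)) (φ : Euc d → ℝ) : Prop :=
  ContDiff ℝ (⊤ : ℕ∞) φ ∧ HasCompactSupport φ ∧ tsupport φ ⊆ A

/-- The `p`-Hessian–Schatten total variation of `f` on `A`: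
`sup { ∫_A ∑_{i,j} f ∂ᵢ∂ⱼ F_{ij} }` over smooth matrix fields `F` compactly supported in `A`
with `‖F‖_{p*,∞} ≤ 1`. -/
def HSV {d : ℕ} (p : ℝ≥0∞) (f : Euc d → ℝ) (A : Set (Euc d)) : ℝ≥0∞ :=
  ⨆ (F : Fin d → Fin d → Euc d → ℝ) (_ : (∀ i j, IsTestFun A (F i j)) ∧
      ∀ x, schattenNorm (dualExp p) (Matrix.of fun i j => F i j x) ≤ 1),
    ENNReal.ofReal (∫ x in A, ∑ i, ∑ j, f x * epd i (epd j (F i j)) x)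

/-- A triangulation of `ℝ^d`: vertices `V`, elements `E` (nondegenerate `d`-simplexes,
with vertex set `verts e`), any two elements meeting in the convex hull of their common
vertices, covering `ℝ^d`. -/
structure Triangulation (d : ℕ) where
  V : Set (Euc d)
  E : Set (Set (Euc d))
  verts : Set (Euc d) → Finset (Euc d)
  interior_nonempty : ∀ e ∈ E, (interior e).Nonempty
  card_verts : ∀ e ∈ E, (verts e).card = d + 1
  eq_hull : ∀ e ∈ E, e = convexHull ℝ (verts e : Set (Euc d))
  V_eq : V = ⋃ e ∈ E, (verts e : Set (Euc d))
  inter_eq : ∀ e ∈ E, ∀ e' ∈ E, e ∩ e' = convexHull ℝ ((verts e ∩ verts e' : Finset (Euc d)) : Set (Euc d))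
  covers : ⋃ e ∈ E, e = Set.univ

/-- The Delaunay property: any open ball whose boundary sphere contains the vertex set of an
element contains no vertex of the triangulation. -/
def Delaunay {d : ℕ} (T : Triangulation d) : Prop :=
  ∀ e ∈ T.E, ∀ (c : Euc d) (ρ : ℝ), (↑(T.verts e) : Set (Euc d)) ⊆ Metric.sphere c ρ →
    Metric.ball c ρ ∩ T.V = ∅


lemma volume_le_hausdorff {n : ℕ} (s : Set (Euc n)) :
    volume s ≤ μH[(n : ℝ)] s := by
  set e := (MeasurableEquiv.toLp 2 (Fin n → ℝ)).symm
  have he : MeasurePreserving e volume volume :=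
    EuclideanSpace.volume_preserving_symm_measurableEquiv_toLp (Fin n)
  have h1 : volume s = volume (e '' s) := by
    rw [MeasurableEquiv.image_eq_preimage_symm]
    exact (he.symm e |>.measure_preimage_equiv s).symm
  have h2 : volume (e '' s) = μH[(n : ℝ)] (e '' s) := by
    have := hausdorffMeasure_pi_real (ι := Fin n)
    rw [Fintype.card_fin] at this
    rw [← this]
  have h3 : μH[(n : ℝ)] (e '' s) ≤ μH[(n : ℝ)] s := by
    have hlip : LipschitzWith 1 (e : Euc n → (Fin n → ℝ)) := by
      have := PiLp.lipschitzWith_ofLp 2 (fun _ : Fin n => ℝ)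
      convert this using 1
      rfl
    simpa using hlip.hausdorffMeasure_image_le (by positivity) s
  rw [h1, h2]; exact h3

lemma volume_image_euc {n : ℕ} (s : Set (Euc n)) :
    volume (((MeasurableEquiv.toLp 2 (Fin n → ℝ)).symm) '' s) = volume s := by
  have he : MeasurePreserving ((MeasurableEquiv.toLp 2 (Fin n → ℝ)).symm) volume volume :=
    EuclideanSpace.volume_preserving_symm_measurableEquiv_toLp (Fin n)
  rw [MeasurableEquiv.image_eq_preimage_symm]
  exact (he.symm _ |>.measure_preimage_equiv s)


def cornerSimplex (n : ℕ) : Set (Fin n → ℝ) :=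
  {x | (∀ i, 0 ≤ x i) ∧ ∑ i, x i ≤ 1}

lemma cornerSimplex_isCompact (n : ℕ) : IsCompact (cornerSimplex n) := by
  have hsub : cornerSimplex n ⊆ Set.Icc 0 1 := by
    rintro x ⟨h0, h1⟩
    constructor
    · intro i; exact h0 i
    · intro i
      calc x i ≤ ∑ j, x j := Finset.single_le_sum (fun j _ => h0 j) (Finset.mem_univ i)
        _ ≤ 1 := h1
  refine IsCompact.of_isClosed_subset isCompact_Icc ?_ hsub
  have h1 : IsClosed {x : Fin n → ℝ | ∀ i, 0 ≤ x i} := by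
    have he : {x : Fin n → ℝ | ∀ i, 0 ≤ x i} = ⋂ i, {x | 0 ≤ x i} := by
      ext x; simp [Set.mem_iInter]
    rw [he]
    exact isClosed_iInter fun i => isClosed_le continuous_const (continuous_apply i)
  have h2 : IsClosed {x : Fin n → ℝ | ∑ i, x i ≤ 1} :=
    isClosed_le (by continuity) continuous_const
  exact h1.inter h2

lemma volume_cornerSimplex (n : ℕ) :
    ((n.factorial : ℝ≥0∞))⁻¹ ≤ volume (cornerSimplex n) := by
  classical
  -- the summation linear map
  set L : Matrix (Fin n) (Fin n) ℝ := Matrix.of fun i j => if j ≤ i then 1 else 0 with hL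
  set P : (Fin n → ℝ) →ₗ[ℝ] (Fin n → ℝ) := Matrix.toLin' L with hP
  have hdet : LinearMap.det P = 1 := by
    rw [hP, LinearMap.det_toLin']
    rw [Matrix.det_of_lowerTriangular L (by
      intro i j hij
      have hij' : i < j := by simpa using hij
      simp only [hL, Matrix.of_apply, if_neg (not_le.mpr hij')])]
    simp [hL]
  set O : Set (Fin n → ℝ) := P '' cornerSimplex n with hO
  have hOvol : volume O = volume (cornerSimplex n) := by
    rw [hO, Measure.addHaar_image_linearMap, hdet]
    simp
  have hOmeas : NullMeasurableSet O volume := by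
    have : IsCompact O := (cornerSimplex_isCompact n).image (LinearMap.continuous_of_finiteDimensional P)
    exact this.isClosed.measurableSet.nullMeasurableSet
  -- P t i = ∑_{k ≤ i} t k
  have hPapp : ∀ (t : Fin n → ℝ) (i : Fin n),
      P t i = ∑ k ∈ Finset.range ((i:ℕ) + 1), (fun k => if h : k < n then t ⟨k, h⟩ else 0) k := by
    intro t i
    have h1 : P t i = ∑ j : Fin n, (if j ≤ i then 1 else 0) * t j := by
      rw [hP]
      simp [Matrix.toLin'_apply, Matrix.mulVec, dotProduct, hL]
    rw [h1]
    have h2 : ∀ j : Fin n, (if j ≤ i then (1:ℝ) else 0) * t j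
        = (fun k : ℕ => if k ≤ (i:ℕ) then (if h : k < n then t ⟨k, h⟩ else 0) else 0) (j:ℕ) := by
      intro j
      by_cases hj : j ≤ i
      · have hj' : (j:ℕ) ≤ (i:ℕ) := hj
        simp [hj, hj', j.isLt]
      · have hj' : ¬ ((j:ℕ) ≤ (i:ℕ)) := hj
        simp [hj, hj']
    rw [Finset.sum_congr rfl (fun j _ => h2 j),
      Fin.sum_univ_eq_sum_range (fun k : ℕ => if k ≤ (i:ℕ) then (if h : k < n then t ⟨k, h⟩ else 0) else 0) n]
    have h3 : ∑ k ∈ Finset.range ((i:ℕ)+1),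
          (if k ≤ (i:ℕ) then (if h : k < n then t ⟨k, h⟩ else 0) else 0)
        = ∑ k ∈ Finset.range n,
          (if k ≤ (i:ℕ) then (if h : k < n then t ⟨k, h⟩ else 0) else 0) := by
      refine Finset.sum_subset (Finset.range_subset_range.mpr i.isLt) ?_
      intro x hx hx2
      simp only [Finset.mem_range] at hx hx2
      rw [if_neg (by omega)]
    rw [← h3]
    refine Finset.sum_congr rfl fun k hk => ?_
    rw [if_pos (by simp only [Finset.mem_range] at hk; omega)]
  -- cube covered
  have hcover : Set.pi Set.univ (fun _ : Fin n => Set.Icc (0:ℝ) 1) ⊆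
      ⋃ σ : Equiv.Perm (Fin n),
        (MeasurableEquiv.piCongrLeft (fun _ : Fin n => ℝ) σ.symm) ⁻¹' O := by
    intro x hx
    have hx' : ∀ i, x i ∈ Set.Icc (0:ℝ) 1 := fun i => hx i (Set.mem_univ i)
    set σ := Tuple.sort x with hσ
    set y : Fin n → ℝ := x ∘ σ with hy
    have hmono : Monotone y := Tuple.monotone_sort x
    refine Set.mem_iUnion.mpr ⟨σ, ?_⟩
    have happ : (MeasurableEquiv.piCongrLeft (fun _ : Fin n => ℝ) σ.symm) x = y := by
      funext i
      have h := MeasurableEquiv.piCongrLeft_apply_apply (β := fun _ : Fin n => ℝ) σ.symm x (σ i)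
      simpa [hy] using h
    rw [Set.mem_preimage, happ]
    -- construct the preimage point
    set f : ℕ → ℝ := fun k => if h : 0 < k ∧ k ≤ n then y ⟨k-1, by omega⟩ else 0 with hf
    set t : Fin n → ℝ := fun j => f ((j:ℕ)+1) - f (j:ℕ) with ht
    have hfsucc : ∀ j : Fin n, f ((j:ℕ)+1) = y j := by
      intro j
      have hj : 0 < (j:ℕ)+1 ∧ (j:ℕ)+1 ≤ n := ⟨Nat.succ_pos _, j.isLt⟩
      rw [hf]
      simp only [hj, and_self, dif_pos]
      have he : (⟨(j:ℕ)+1-1, by omega⟩ : Fin n) = j := by ext; simp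
      rw [he]
    have ht0 : ∀ j, 0 ≤ t j := by
      intro j
      rw [ht]
      simp only
      rw [hfsucc j]
      by_cases hj : (j:ℕ) = 0
      · have hf0 : f (j:ℕ) = 0 := by rw [hf]; simp [hj]
        rw [hf0, sub_zero]
        exact (hx' (σ j)).1
      · have hjn : 0 < (j:ℕ) ∧ (j:ℕ) ≤ n := ⟨Nat.pos_of_ne_zero hj, le_of_lt j.isLt⟩
        rw [hf]
        simp only [hjn, and_self, dif_pos]
        refine sub_nonneg.mpr (hmono ?_)
        simp only [Fin.le_def]
        omega
    have htsum : ∑ j, t j = f n := by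
      rw [ht, Fin.sum_univ_eq_sum_range (fun k => f (k+1) - f k), Finset.sum_range_sub]
      simp [hf]
    have htmem : t ∈ cornerSimplex n := by
      refine ⟨ht0, ?_⟩
      rw [htsum]
      rcases Nat.eq_zero_or_pos n with hn | hn
      · simp [hf, hn]
      · rw [hf]
        simp only [hn, le_refl, and_self, dif_pos]
        exact (hx' _).2
    refine ⟨t, htmem, ?_⟩
    funext i
    rw [hPapp t i]
    have h4 : ∀ k ∈ Finset.range ((i:ℕ)+1),
        (fun k => if h : k < n then t ⟨k, h⟩ else 0) k = f (k+1) - f k := by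
      intro k hk
      simp only [Finset.mem_range] at hk
      have hkn : k < n := by omega
      simp only [hkn, dif_pos, ht]
    rw [Finset.sum_congr rfl h4, Finset.sum_range_sub]
    have : f 0 = 0 := by simp [hf]
    rw [this, sub_zero, hfsucc i]
  have hcube : volume (Set.pi Set.univ (fun _ : Fin n => Set.Icc (0:ℝ) 1)) = 1 := by
    rw [volume_pi_pi]; simp
  have hmain : (1 : ℝ≥0∞) ≤ (n.factorial : ℝ≥0∞) * volume (cornerSimplex n) := by
    calc (1:ℝ≥0∞) = volume (Set.pi Set.univ (fun _ : Fin n => Set.Icc (0:ℝ) 1)) := hcube.symm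
      _ ≤ volume (⋃ σ : Equiv.Perm (Fin n),
            (MeasurableEquiv.piCongrLeft (fun _ : Fin n => ℝ) σ.symm) ⁻¹' O) :=
          measure_mono hcover
      _ ≤ ∑ σ : Equiv.Perm (Fin n), volume
            ((MeasurableEquiv.piCongrLeft (fun _ : Fin n => ℝ) σ.symm) ⁻¹' O) :=
          measure_iUnion_fintype_le _ _
      _ = ∑ _σ : Equiv.Perm (Fin n), volume O := by
          refine Finset.sum_congr rfl fun σ _ => ?_
          exact (volume_measurePreserving_piCongrLeft (fun _ : Fin n => ℝ) σ.symm).measure_preimage hOmeas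
      _ = (n.factorial : ℝ≥0∞) * volume (cornerSimplex n) := by
          rw [Finset.sum_const, Finset.card_univ, Fintype.card_perm, Fintype.card_fin, hOvol]
          simp [nsmul_eq_mul]
  have hfac : (n.factorial : ℝ≥0∞) ≠ 0 := by
    exact_mod_cast Nat.cast_ne_zero.mpr n.factorial_ne_zero
  have hfac' : (n.factorial : ℝ≥0∞) ≠ ∞ := ENNReal.natCast_ne_top _
  calc ((n.factorial : ℝ≥0∞))⁻¹ = (n.factorial : ℝ≥0∞)⁻¹ * 1 := (mul_one _).symm
    _ ≤ (n.factorial : ℝ≥0∞)⁻¹ * ((n.factorial : ℝ≥0∞) * volume (cornerSimplex n)) :=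
        mul_le_mul_right hmain _
    _ = volume (cornerSimplex n) := by
        rw [← mul_assoc, ENNReal.inv_mul_cancel hfac hfac', one_mul]

lemma hull_volume_lb {n : ℕ} (u : Fin n → (Fin n → ℝ)) :
    ENNReal.ofReal |(Matrix.of fun i k => u k i : Matrix (Fin n) (Fin n) ℝ).det|
      * volume (cornerSimplex n)
      ≤ volume (convexHull ℝ (Set.range (Fin.cons 0 u : Fin (n+1) → (Fin n → ℝ)))) := by
  classical
  set U : Matrix (Fin n) (Fin n) ℝ := Matrix.of fun i k => u k i with hU
  set M : (Fin n → ℝ) →ₗ[ℝ] (Fin n → ℝ) := Matrix.toLin' U with hM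
  have hMapp : ∀ t : Fin n → ℝ, M t = ∑ k, t k • u k := by
    intro t
    funext i
    rw [hM]
    simp only [Matrix.toLin'_apply, Matrix.mulVec, dotProduct, hU, Matrix.of_apply]
    rw [Finset.sum_apply]
    exact Finset.sum_congr rfl fun k _ => by simp [mul_comm]
  have himg : M '' cornerSimplex n ⊆
      convexHull ℝ (Set.range (Fin.cons 0 u : Fin (n+1) → (Fin n → ℝ))) := by
    rintro _ ⟨t, ⟨ht0, ht1⟩, rfl⟩
    have hcm := Finset.centerMass_mem_convexHull (Finset.univ : Finset (Fin (n+1)))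
      (w := Fin.cons (1 - ∑ k, t k) t)
      (by
        intro i _
        induction i using Fin.cases with
        | zero => simpa using sub_nonneg.mpr ht1
        | succ j => simpa using ht0 j)
      (by
        rw [Fin.sum_cons]
        simp)
      (z := (Fin.cons 0 u : Fin (n+1) → (Fin n → ℝ)))
      (fun i _ => Set.mem_range_self i)
    have hsum : ∑ i, (Fin.cons (1 - ∑ k, t k) t : Fin (n+1) → ℝ) i = 1 := by
      rw [Fin.sum_cons]; ring
    rw [Finset.centerMass, hsum] at hcm
    have hexp : ∑ i : Fin (n+1), (Fin.cons (1 - ∑ k, t k) t : Fin (n+1) → ℝ) i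
        • (Fin.cons 0 u : Fin (n+1) → (Fin n → ℝ)) i = ∑ k, t k • u k := by
      rw [Fin.sum_univ_succ]
      simp
    rw [hMapp t]
    simpa [hexp] using hcm
  calc ENNReal.ofReal |U.det| * volume (cornerSimplex n)
      = volume (M '' cornerSimplex n) := by
        rw [hM, Measure.addHaar_image_linearMap, LinearMap.det_toLin']
    _ ≤ _ := measure_mono himg


lemma det_ge_one {n : ℕ} (u : Fin n → (Fin n → ℝ)) (hind : LinearIndependent ℝ u)
    (Z : Matrix (Fin n) (Fin n) ℤ)
    (hZ : ∀ i j, (Z i j : ℝ) = ∑ k, u i k * u j k) :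
    1 ≤ |(Matrix.of fun i k => u k i : Matrix (Fin n) (Fin n) ℝ).det| := by
  classical
  set U : Matrix (Fin n) (Fin n) ℝ := Matrix.of fun i k => u k i with hU
  have hGram : U.transpose * U = Z.map (Int.cast : ℤ → ℝ) := by
    ext i j
    simp only [Matrix.mul_apply, Matrix.transpose_apply, Matrix.map_apply, hU, Matrix.of_apply]
    rw [hZ i j]
  have hdetZ : ((Z.det : ℤ) : ℝ) = U.det ^ 2 := by
    have h1 : (Z.map (Int.cast : ℤ → ℝ)).det = ((Z.det : ℤ) : ℝ) :=
      (RingHom.map_det (Int.castRingHom ℝ) Z).symm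
    have h2 : (U.transpose * U).det = U.det ^ 2 := by
      rw [Matrix.det_mul, Matrix.det_transpose, sq]
    rw [← h1, ← hGram, h2]
  have hdetU : U.det ≠ 0 := by
    intro h0
    obtain ⟨t, ht, htv⟩ := Matrix.exists_mulVec_eq_zero_iff.mpr h0
    have hsum : ∑ k, t k • u k = 0 := by
      funext i
      have := congrFun htv i
      simp only [Matrix.mulVec, dotProduct, hU, Matrix.of_apply] at this
      rw [Finset.sum_apply]
      simpa [mul_comm] using this
    have := Fintype.linearIndependent_iff.mp hind t hsum
    exact ht (funext this)
  have hZpos : 0 < Z.det := by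
    by_contra hle
    push_neg at hle
    have : ((Z.det : ℤ) : ℝ) ≤ 0 := by exact_mod_cast hle
    rw [hdetZ] at this
    exact pow_ne_zero 2 hdetU (le_antisymm this (sq_nonneg _))
  have hZ1 : (1 : ℝ) ≤ ((Z.det : ℤ) : ℝ) := by exact_mod_cast hZpos
  rw [hdetZ] at hZ1
  nlinarith [abs_nonneg U.det, sq_abs U.det]


set_option maxHeartbeats 1000000 in
/-- If `w ⊆ ℤ^d` consists of `d` lattice points, then either `w` lies in a
`(d−2)`-dimensional affine subspace, or the `(d−1)`-dimensional Hausdorff measure of its convex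
hull is `≥ 1/(d−1)!`. -/
theorem hausdorff_convexHull_lattice_points {d : ℕ} (w : Finset (Euc d)) (hcard : w.card = d)
    (hlat : ∀ x ∈ w, ∀ i, ∃ z : ℤ, x i = (z : ℝ)) :
    (∃ S : AffineSubspace ℝ (Euc d), (↑w : Set (Euc d)) ⊆ S ∧
        Module.finrank ℝ S.direction ≤ d - 2) ∨
    (((d - 1).factorial : ℝ≥0∞))⁻¹ ≤ μH[(d : ℝ) - 1] (convexHull ℝ (↑w : Set (Euc d))) := by
  classical
  rcases Nat.eq_zero_or_pos d with hd0 | hdpos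
  · -- d = 0
    subst hd0
    left
    refine ⟨⊥, ?_, ?_⟩
    · have : w = ∅ := Finset.card_eq_zero.mp hcard
      simp [this]
    · rw [AffineSubspace.direction_bot]
      simp
  obtain ⟨n, rfl⟩ : ∃ n, d = n + 1 := ⟨d - 1, by omega⟩
  set x : Fin (n+1) → Euc (n+1) := fun i => ↑(w.equivFin.symm (Fin.cast hcard.symm i)) with hx
  have hxmem : ∀ i, x i ∈ w := fun i => (w.equivFin.symm (Fin.cast hcard.symm i)).2
  have hrange : Set.range x = (↑w : Set (Euc (n+1))) := by
    ext b
    constructor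
    · rintro ⟨i, rfl⟩; exact hxmem i
    · intro hb
      refine ⟨Fin.cast hcard (w.equivFin ⟨b, hb⟩), ?_⟩
      show ↑(w.equivFin.symm (Fin.cast hcard.symm (Fin.cast hcard (w.equivFin ⟨b, hb⟩)))) = b
      have h1 : Fin.cast hcard.symm (Fin.cast hcard (w.equivFin ⟨b, hb⟩)) = w.equivFin ⟨b, hb⟩ := by
        ext; simp
      rw [h1, Equiv.symm_apply_apply]
  by_cases haff : AffineIndependent ℝ x
  swap
  · -- degenerate case
    left
    refine ⟨affineSpan ℝ (↑w : Set (Euc (n+1))), subset_affineSpan ℝ _, ?_⟩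
    rw [direction_affineSpan]
    rcases Nat.eq_zero_or_pos n with hn0 | hnpos
    · exfalso
      subst hn0
      haveI : Subsingleton (Fin (0+1)) := Fin.subsingleton_one
      exact haff (affineIndependent_of_subsingleton ℝ x)
    obtain ⟨m, rfl⟩ : ∃ m, n = m + 1 := ⟨n - 1, by omega⟩
    have hcardfin : Fintype.card (Fin (m + 2)) = m + 2 := by simp
    have := (finrank_vectorSpan_le_iff_not_affineIndependent ℝ x hcardfin).mpr haff
    rw [hrange] at this
    simpa using this
  · -- independent case
    right
    -- the difference vectors
    set v : Fin n → Euc (n+1) := fun i => x i.succ - x 0 with hv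
    have hvind : LinearIndependent ℝ v := by
      have h1 := (affineIndependent_iff_linearIndependent_vsub ℝ x 0).mp haff
      have h2 := h1.comp
        (fun i : Fin n => (⟨i.succ, Fin.succ_ne_zero i⟩ : {i : Fin (n+1) // i ≠ 0}))
        (by
          intro a b hab
          have : a.succ = b.succ := congrArg Subtype.val hab
          exact Fin.succ_injective n this)
      exact h2
    set D : Submodule ℝ (Euc (n+1)) := Submodule.span ℝ (Set.range v) with hD
    have hfinD : Module.finrank ℝ D = n := (finrank_span_eq_card hvind).trans (Fintype.card_fin n)
    set b : OrthonormalBasis (Fin n) ℝ D :=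
      (stdOrthonormalBasis ℝ D).reindex (finCongr hfinD) with hb
    set J : Euc n →ₗᵢ[ℝ] Euc (n+1) := D.subtypeₗᵢ.comp b.repr.symm.toLinearIsometry with hJ
    set u : Fin n → Euc n :=
      fun i => b.repr ⟨v i, Submodule.subset_span (Set.mem_range_self i)⟩ with hu
    have hJu : ∀ i, J (u i) = v i := by
      intro i
      simp [hJ, hu]
    -- the affine isometry
    set g : Euc n → Euc (n+1) := fun y => x 0 + J y with hg
    have hgiso : Isometry g := by
      refine Isometry.of_dist_eq fun a a' => ?_
      rw [hg]
      simp only [dist_eq_norm]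
      have : x 0 + J a - (x 0 + J a') = J (a - a') := by
        rw [map_sub]; abel
      rw [this, J.norm_map]
    set gA : Euc n →ᵃ[ℝ] Euc (n+1) :=
      AffineMap.mk' g J.toLinearMap 0 (by
        intro p'
        show g p' = J.toLinearMap (p' - 0) + g 0
        rw [hg]
        simp only [sub_zero, map_zero, add_zero, LinearIsometry.coe_toLinearMap]
        abel) with hgA
    set p : Fin (n+1) → Euc n := Fin.cons 0 u with hp
    have hgp : g ∘ p = x := by
      funext i
      induction i using Fin.cases with
      | zero => simp [hg, hp]
      | succ j =>
          simp only [Function.comp_apply, hp, Fin.cons_succ, hg, hJu j, hv]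
          abel
    -- image of hull
    have himg : g '' (convexHull ℝ (Set.range p)) = convexHull ℝ (↑w : Set (Euc (n+1))) := by
      have h1 : g '' (convexHull ℝ (Set.range p)) = convexHull ℝ (g '' Set.range p) := by
        have := AffineMap.image_convexHull gA (Set.range p)
        simpa [hgA, AffineMap.coe_mk'] using this
      rw [h1, ← Set.range_comp, hgp, hrange]
    -- Hausdorff measure chain
    have hexp : ((n + 1 : ℕ) : ℝ) - 1 = (n : ℝ) := by push_cast; ring
    have hfact : (n + 1) - 1 = n := by omega
    rw [hexp, hfact, ← himg]
    rw [hgiso.hausdorffMeasure_image (Or.inl (by positivity))]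
    refine le_trans ?_ (volume_le_hausdorff _)
    rw [← volume_image_euc (convexHull ℝ (Set.range p))]
    -- transfer to pi space
    set ψ : Euc n ≃ₗ[ℝ] (Fin n → ℝ) := WithLp.linearEquiv 2 ℝ (Fin n → ℝ) with hψ
    have hcoe : ⇑((MeasurableEquiv.toLp 2 (Fin n → ℝ)).symm) = ⇑ψ := rfl
    set u' : Fin n → (Fin n → ℝ) := fun i => ψ (u i) with hu'
    have himg2 : ((MeasurableEquiv.toLp 2 (Fin n → ℝ)).symm) '' (convexHull ℝ (Set.range p))
        = convexHull ℝ (Set.range (Fin.cons 0 u' : Fin (n+1) → (Fin n → ℝ))) := by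
      rw [hcoe]
      have himgψ := ψ.toLinearMap.image_convexHull (Set.range p)
      simp only [LinearEquiv.coe_coe] at himgψ
      rw [himgψ]
      rw [← Set.range_comp]
      have hcomp : ⇑ψ ∘ p = (Fin.cons 0 u' : Fin (n+1) → (Fin n → ℝ)) := by
        funext i
        induction i using Fin.cases with
        | zero => simp [hp]
        | succ j => simp [hp, hu']
      rw [hcomp]
    rw [himg2]
    -- linear independence of u'
    have huind : LinearIndependent ℝ u := by
      have h1 : LinearIndependent ℝ
          (fun i => (⟨v i, Submodule.subset_span (Set.mem_range_self i)⟩ : D)) := by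
        apply LinearIndependent.of_comp D.subtype
        convert hvind
        rfl
      have h2 := h1.map' b.repr.toLinearEquiv.toLinearMap b.repr.toLinearEquiv.ker
      exact h2
    have hu'ind : LinearIndependent ℝ u' := by
      have := huind.map' ψ.toLinearMap ψ.ker
      exact this
    -- integer Gram matrix
    have hz : ∀ i k, ∃ z : ℤ, x i k = (z : ℝ) := fun i k => hlat (x i) (hxmem i) k
    set zc : Fin (n+1) → Fin (n+1) → ℤ := fun i k => Classical.choose (hz i k) with hzc
    have hzc' : ∀ i k, x i k = ((zc i k : ℤ) : ℝ) := fun i k => Classical.choose_spec (hz i k)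
    set Z : Matrix (Fin n) (Fin n) ℤ :=
      Matrix.of fun i j => ∑ k, (zc i.succ k - zc 0 k) * (zc j.succ k - zc 0 k) with hZdef
    have hinner : ∀ i j : Fin n, ∑ k, u' i k * u' j k = ∑ k, v i k * v j k := by
      intro i j
      have h1 : (inner ℝ (u i) (u j) : ℝ) = inner ℝ (v i) (v j) := by
        have h2 : (inner ℝ (u i) (u j) : ℝ) =
            inner ℝ (⟨v i, Submodule.subset_span (Set.mem_range_self i)⟩ : D)
              (⟨v j, Submodule.subset_span (Set.mem_range_self j)⟩ : D) := by
          rw [hu]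
          exact b.repr.inner_map_map _ _
        rw [h2, Submodule.coe_inner]
      have h3 : (inner ℝ (u i) (u j) : ℝ) = ∑ k, u' i k * u' j k := by
        rw [PiLp.inner_apply]
        refine Finset.sum_congr rfl fun k _ => ?_
        rw [RCLike.inner_apply', conj_trivial]
        rfl
      have h4 : (inner ℝ (v i) (v j) : ℝ) = ∑ k, v i k * v j k := by
        rw [PiLp.inner_apply]
        refine Finset.sum_congr rfl fun k _ => ?_
        rw [RCLike.inner_apply', conj_trivial]
      rw [← h3, ← h4, h1]
    have hZ : ∀ i j, ((Z i j : ℤ) : ℝ) = ∑ k, u' i k * u' j k := by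
      intro i j
      rw [hinner i j, hZdef]
      simp only [Matrix.of_apply]
      push_cast
      refine Finset.sum_congr rfl fun k _ => ?_
      have hv1 : v i k = x i.succ k - x 0 k := rfl
      have hv2 : v j k = x j.succ k - x 0 k := rfl
      rw [hv1, hv2, hzc' i.succ k, hzc' 0 k, hzc' j.succ k]
    -- final estimate
    have hdet := det_ge_one u' hu'ind Z hZ
    refine le_trans ?_ (hull_volume_lb u')
    have h5 : (1 : ℝ≥0∞) ≤ ENNReal.ofReal
        |(Matrix.of fun i k => u' k i : Matrix (Fin n) (Fin n) ℝ).det| := by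
      rw [show (1 : ℝ≥0∞) = ENNReal.ofReal 1 by simp]
      exact ENNReal.ofReal_le_ofReal hdet
    calc ((n.factorial : ℝ≥0∞))⁻¹ = 1 * ((n.factorial : ℝ≥0∞))⁻¹ := (one_mul _).symm
      _ ≤ ENNReal.ofReal |(Matrix.of fun i k => u' k i : Matrix (Fin n) (Fin n) ℝ).det|
          * volume (cornerSimplex n) := mul_le_mul' h5 (volume_cornerSimplex n)
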